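/- Let f_1,…,f_s ∈ R be homogeneous polynomials of degrees d_1,…,d_s such that every subset of at most c+1 of them is an R-regular sequence, where 1 ≤ c ≤ min(n,s) and s > c. Set λ = [d_1,…,d_s] and λ' = [d_1,…,d_{s−1}]. Then for all t, the Hilbert functions satisfy h_{R/I_{V_{λ,c}}}(t) = [h_{R/I_{V_{λ',c−1}}}(t) − h_{R/I_{V_{λ',c−1}}}(t−d_s)] + h_{R/I_{V_{λ',c}}}(t−d_s), where I_{V_{λ',c−1}} and I_{V_{λ',c}} are the configuration ideals built from f_1,…,f_{s−1} in codimensions c−1 and c. -/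

import Mathlib

open MvPolynomial CategoryTheory

noncomputable section

/-- The height of an ideal: the infimum of the heights of the prime ideals containing it. -/
noncomputable def idealHeight {A : Type*} [CommRing A] (I : Ideal A) : ℕ∞ :=
  ⨅ P ∈ {P : PrimeSpectrum A | I ≤ P.asIdeal}, Order.height P

/-- The depth of a module `M` with respect to an ideal `J`: the supremum of the lengths of
`M`-regular sequences consisting of elements of `J`. -/
noncomputable def idealDepth {A : Type*} [CommRing A] (J : Ideal A)
    (M : Type*) [AddCommGroup M] [Module A M] : ℕ∞ :=
  sSup {n : ℕ∞ | ∃ rs : List A, (rs.length : ℕ∞) = n ∧ (∀ r ∈ rs, r ∈ J) ∧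
    RingTheory.Sequence.IsRegular M rs}

/-- The irrelevant maximal ideal `(x_i : i ∈ σ)` of the polynomial ring `k[x_i : i ∈ σ]`. -/
def irrelevantIdeal (k : Type) [Field k] (σ : Type) : Ideal (MvPolynomial σ k) :=
  Ideal.span (Set.range (X : σ → MvPolynomial σ k))

/-- The quotient of a polynomial ring by an ideal `I` is Cohen–Macaulay if its depth with
respect to the irrelevant maximal ideal equals its Krull dimension. -/
def IsCMQuotient {k : Type} [Field k] {σ : Type} (I : Ideal (MvPolynomial σ k)) : Prop :=
  (idealDepth (irrelevantIdeal k σ) (MvPolynomial σ k ⧸ I) : WithBot ℕ∞)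
    = ringKrullDim (MvPolynomial σ k ⧸ I)

/-- An ideal of a polynomial ring is homogeneous if it contains all homogeneous components
of each of its elements. -/
def IsHomogeneousIdeal {k : Type} [Field k] {σ : Type} (I : Ideal (MvPolynomial σ k)) : Prop :=
  ∀ p ∈ I, ∀ i : ℕ, homogeneousComponent i p ∈ I

/-- The Hilbert function of `R/I`, `t ↦ dim_k [R/I]_t`, as a function `ℤ → ℤ`
(equal to `0` in negative degrees). -/
noncomputable def hilbertFn (k : Type) [Field k] {σ : Type} (I : Ideal (MvPolynomial σ k))
    (t : ℤ) : ℤ :=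
  if t < 0 then 0
  else
    (Module.finrank k (homogeneousSubmodule σ k t.toNat) : ℤ) -
    (Module.finrank k
      ((Submodule.restrictScalars k (I : Submodule (MvPolynomial σ k) (MvPolynomial σ k))) ⊓
        homogeneousSubmodule σ k t.toNat : Submodule k (MvPolynomial σ k)) : ℤ)

/-- `P` is the Hilbert polynomial of `R/I` if it agrees with the Hilbert function of `R/I`
in all sufficiently large degrees. -/
def IsHilbertPolyOf (k : Type) [Field k] {σ : Type} (I : Ideal (MvPolynomial σ k))
    (P : Polynomial ℚ) : Prop :=
  ∃ N : ℤ, ∀ t : ℤ, N ≤ t → (hilbertFn k I t : ℚ) = P.eval (t : ℚ)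

open Classical in
/-- The Hilbert polynomial of `R/I` (defined as `0` if none exists). -/
noncomputable def hilbertPoly (k : Type) [Field k] {σ : Type} (I : Ideal (MvPolynomial σ k)) :
    Polynomial ℚ :=
  if h : ∃ P : Polynomial ℚ, IsHilbertPolyOf k I P then h.choose else 0

/-- The multiplicity (degree) `e(R/I)`: `(δ-1)!` times the leading coefficient of the Hilbert
polynomial of `R/I`, whose degree is `δ - 1` where `δ = dim R/I ≥ 1`. -/
noncomputable def multiplicityDeg (k : Type) [Field k] {σ : Type}
    (I : Ideal (MvPolynomial σ k)) : ℚ :=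
  (Nat.factorial (hilbertPoly k I).natDegree) * (hilbertPoly k I).leadingCoeff

/-- The `m`-th symbolic power of an ideal `J`:
`J^{(m)} = ⋂_{P ∈ Ass(A/J)} (J^m A_P ∩ A)`. -/
noncomputable def symbolicPower {A : Type*} [CommRing A] (J : Ideal A) (m : ℕ) : Ideal A :=
  sInf { K : Ideal A | ∃ (P : Ideal A) (hP : IsAssociatedPrime P (A ⧸ J)),
    K = Ideal.comap (algebraMap A (Localization (@Ideal.primeCompl A _ P hP.1)))
          (Ideal.map (algebraMap A (Localization (@Ideal.primeCompl A _ P hP.1))) (J ^ m)) }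

/-- `α(I)`: the least degree of a nonzero form in `I`. -/
noncomputable def alphaDeg (k : Type) [Field k] {σ : Type} (I : Ideal (MvPolynomial σ k)) : ℕ :=
  sInf {d : ℕ | ∃ p ∈ I, p ≠ 0 ∧ MvPolynomial.IsHomogeneous p d}

/-- `dim_k Tor_i^A(M, N)`, the rank over the base field `k` of the Tor module. -/
noncomputable def torRank (k : Type) [Field k] (A : Type) [CommRing A] [Algebra k A]
    (M N : Type) [AddCommGroup M] [Module A M] [AddCommGroup N] [Module A N] (i : ℕ) :
    Cardinal :=
  Module.rank k (RestrictScalars k A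
    (((Tor (ModuleCat A) i).obj (ModuleCat.of A M)).obj (ModuleCat.of A N)))

/-- The `i`-th total Betti number `dim_k Tor_i(S/I, k)` of `S/I`, where
`k = S/(x_i : i ∈ σ)`. -/
noncomputable def bettiNum (k : Type) [Field k] {σ : Type} (I : Ideal (MvPolynomial σ k))
    (i : ℕ) : Cardinal :=
  torRank k (MvPolynomial σ k) (MvPolynomial σ k ⧸ I)
    (MvPolynomial σ k ⧸ irrelevantIdeal k σ) i

/-- The first map `I_S → I_C ⊕ I_S`, `g ↦ (g, f·g)`, of the basic double linkage sequence. -/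
def bdlFirstMap {A : Type*} [CommRing A] {I_S I_C : Ideal A} (h : I_S ≤ I_C) (f : A) :
    I_S →ₗ[A] I_C × I_S :=
  LinearMap.prod (Submodule.inclusion h) (f • LinearMap.id)

/-- The second map `I_C ⊕ I_S → f·I_C + I_S`, `(a, b) ↦ f·a - b`, of the basic double
linkage sequence. -/
def bdlSecondMap {A : Type*} [CommRing A] (I_C I_S : Ideal A) (f : A) :
    I_C × I_S →ₗ[A] ↥(Ideal.span {f} * I_C + I_S) :=
  LinearMap.coprod
    (LinearMap.codRestrict ((Ideal.span {f} * I_C + I_S : Ideal A) : Submodule A A)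
      (f • (Submodule.subtype (I_C : Submodule A A)))
      (fun c => Submodule.mem_sup_left
        (Ideal.mul_mem_mul (Ideal.mem_span_singleton_self f) c.2)))
    (- LinearMap.codRestrict ((Ideal.span {f} * I_C + I_S : Ideal A) : Submodule A A)
      (Submodule.subtype (I_S : Submodule A A))
      (fun c => Submodule.mem_sup_right c.2))

/-- The ideal `I_{V_{λ,c}}` of the codimension-`c` configuration determined by `f_1, …, f_s`:
the intersection of the ideals `(f_{i_1}, …, f_{i_c})` over all `c`-subsets. -/
def configIdeal {A : Type*} [CommRing A] {s : ℕ} (c : ℕ) (f : Fin s → A) : Ideal A :=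
  ⨅ T ∈ {T : Finset (Fin s) | T.card = c}, Ideal.span (f '' ↑T)

/-- Every sublist of at most `m` of the elements `f 1, …, f s` (in any order, without
repetitions) is a regular sequence. -/
def SubsetsRegular {A : Type*} [CommRing A] {s : ℕ} (f : Fin s → A) (m : ℕ) : Prop :=
  ∀ l : List (Fin s), l.Nodup → l.length ≤ m →
    RingTheory.Sequence.IsRegular A (l.map f)

/-- `Δ` is (the independence complex of) a matroid on `{1, …, s}`: a nonempty collection of
subsets closed under inclusion and satisfying the augmentation axiom. -/
def IsMatroid {s : ℕ} (Δ : Finset (Fin s) → Prop) : Prop :=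
  Δ ∅ ∧ (∀ F G : Finset (Fin s), Δ F → G ⊆ F → Δ G) ∧
    (∀ F G : Finset (Fin s), Δ F → Δ G → G.card < F.card →
      ∃ j ∈ F, j ∉ G ∧ Δ (insert j G))

/-- `F` is a basis (facet) of the simplicial complex `Δ`: a maximal face. -/
def IsBasisOf {s : ℕ} (Δ : Finset (Fin s) → Prop) (F : Finset (Fin s)) : Prop :=
  Δ F ∧ ∀ G : Finset (Fin s), Δ G → F ⊆ G → G = F

/-- The Stanley–Reisner ideal of `Δ`, generated by the squarefree monomials corresponding
to the non-faces of `Δ`. -/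
def stanleyReisnerIdeal (k : Type) [Field k] {s : ℕ} (Δ : Finset (Fin s) → Prop) :
    Ideal (MvPolynomial (Fin s) k) :=
  Ideal.span
    ((fun F : Finset (Fin s) => ∏ i ∈ F, (X i : MvPolynomial (Fin s) k)) '' {F | ¬ Δ F})

/-- The ideal `I_{W_c}`: the intersection of all ideals `(A_{i_1,j_1}, …, A_{i_c,j_c})`
where `i_1 < ⋯ < i_c` and each generator is chosen from a different group. -/
def multiPartiteIdeal {A : Type*} [CommRing A] {s : ℕ} (c : ℕ) {e : Fin s → ℕ}
    (g : (i : Fin s) → Fin (e i) → A) : Ideal A :=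
  ⨅ T ∈ {T : Finset (Fin s) | T.card = c}, ⨅ j : (i : Fin s) → Fin (e i),
    Ideal.span ((fun i => g i (j i)) '' ↑T)

end

/-!
Put `q = f_s` and let `J`, `K` be the configuration ideals of `f_1, …, f_{s-1}` in codimensions
`c` and `c - 1`. Sorting the `c`-subsets by whether they contain `s` gives
`I_{V_{λ,c}} = J ∩ ⋂_U ((f_U) + (q))`, the second intersection over the `(c - 1)`-subsets. The
regularity hypothesis makes adding generators commute with such intersections, by an induction
on the index set built on the exchange `(P + (x)) ∩ (Q + (x)) = P ∩ Q + (x)` for `x` regular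
modulo `P + Q`. Hence `I_{V_{λ,c}} = J ∩ (K + (q)) = qJ + K`, the last step because `K ⊆ J` and
`q` is regular modulo `J`. In degree `t` the summands are `q J_{t - d_s}` and `K_t`, which meet
in `q K_{t - d_s}` as `q` is regular modulo `K`; counting dimensions gives the formula.
-/

section IdealLemmas

variable {A : Type*} [CommRing A]

theorem Ideal.isSMulRegular_quotient_iff {P : Ideal A} {x : A} :
    IsSMulRegular (A ⧸ P) x ↔ ∀ a, x * a ∈ P → a ∈ P :=
  isSMulRegular_quotient_iff_mem_of_smul_mem P x

theorem Ideal.isSMulRegular_quotient_iInf {κ : Sort*} {P : κ → Ideal A} {x : A}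
    (h : ∀ i, IsSMulRegular (A ⧸ P i) x) : IsSMulRegular (A ⧸ ⨅ i, P i) x := by
  simp only [Ideal.isSMulRegular_quotient_iff, Submodule.mem_iInf] at h ⊢
  exact fun a ha i => h i a (ha i)

theorem Ideal.inf_sup_span_singleton_le {P Q : Ideal A} {x : A}
    (h : IsSMulRegular (A ⧸ (P ⊔ Q)) x) :
    (P ⊔ Ideal.span {x}) ⊓ (Q ⊔ Ideal.span {x}) ≤ (P ⊓ Q) ⊔ Ideal.span {x} := by
  rintro g ⟨hg1, hg2⟩
  obtain ⟨p, hp, u, hu, rfl⟩ := Submodule.mem_sup.mp hg1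
  obtain ⟨q, hq, v, hv, hqv⟩ := Submodule.mem_sup.mp hg2
  obtain ⟨r, rfl⟩ := Ideal.mem_span_singleton'.mp hu
  obtain ⟨s, rfl⟩ := Ideal.mem_span_singleton'.mp hv
  have hx : x * (s - r) ∈ P ⊔ Q := by
    rw [show x * (s - r) = p - q by linear_combination hqv]
    exact Submodule.sub_mem _ (Submodule.mem_sup_left hp) (Submodule.mem_sup_right hq)
  obtain ⟨p', hp', q', hq', hpq⟩ :=
    Submodule.mem_sup.mp (Ideal.isSMulRegular_quotient_iff.mp h _ hx)
  refine Submodule.mem_sup.mpr ⟨p - p' * x, ⟨?_, ?_⟩, (r + p') * x,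
    Ideal.mem_span_singleton'.mpr ⟨r + p', rfl⟩, by ring⟩
  · exact Submodule.sub_mem _ hp (Ideal.mul_mem_right _ _ hp')
  · rw [show p - p' * x = q + q' * x by linear_combination -hqv - x * hpq]
    exact Submodule.add_mem _ hq (Ideal.mul_mem_right _ _ hq')

theorem Ideal.inf_sup_span_image_le {ι : Type*} [DecidableEq ι] (f : ι → A) (P Q : Ideal A)
    (X : Finset ι)
    (h : ∀ x ∈ X, ∀ Y ⊆ X.erase x,
      IsSMulRegular (A ⧸ (P ⊔ Q ⊔ Ideal.span (f '' Y))) (f x)) :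
    (P ⊔ Ideal.span (f '' X)) ⊓ (Q ⊔ Ideal.span (f '' X))
      ≤ (P ⊓ Q) ⊔ Ideal.span (f '' X) := by
  induction X using Finset.induction_on with
  | empty => simp
  | @insert x X hx ih =>
    have hsplit : ∀ I : Ideal A, I ⊔ Ideal.span (f '' ↑(insert x X))
        = I ⊔ Ideal.span (f '' X) ⊔ Ideal.span {f x} := fun I => by
      rw [Finset.coe_insert, Set.image_insert_eq, Ideal.span_insert, sup_comm (Ideal.span _),
        sup_assoc]
    have hreg : IsSMulRegular
        (A ⧸ (P ⊔ Ideal.span (f '' X) ⊔ (Q ⊔ Ideal.span (f '' X)))) (f x) := by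
      rw [sup_sup_sup_comm, sup_idem]
      exact h x (Finset.mem_insert_self x X) X (by rw [Finset.erase_insert hx])
    have ih' := ih fun z hz Y hY => h z (Finset.mem_insert_of_mem hz) Y
      (hY.trans (Finset.erase_subset_erase _ (Finset.subset_insert _ _)))
    rw [hsplit, hsplit, hsplit]
    exact (Ideal.inf_sup_span_singleton_le hreg).trans (sup_le_sup_right ih' _)

theorem Ideal.inf_sup_span_singleton_eq {J K : Ideal A} {x : A} (hKJ : K ≤ J)
    (hx : IsSMulRegular (A ⧸ J) x) :
    J ⊓ (K ⊔ Ideal.span {x}) = Ideal.span {x} * J ⊔ K := by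
  refine le_antisymm ?_ (sup_le (le_inf Ideal.mul_le_right
    (Ideal.mul_le_left.trans le_sup_right)) (le_inf hKJ le_sup_left))
  rintro g ⟨hgJ, hgK⟩
  obtain ⟨a, ha, u, hu, rfl⟩ := Submodule.mem_sup.mp hgK
  obtain ⟨b, rfl⟩ := Ideal.mem_span_singleton'.mp hu
  have hb : b ∈ J := Ideal.isSMulRegular_quotient_iff.mp hx b <| by
    rw [mul_comm, ← add_sub_cancel_left a (b * x)]
    exact J.sub_mem hgJ (hKJ ha)
  rw [add_comm, mul_comm b x]
  exact Submodule.add_mem_sup (Ideal.mul_mem_mul (Ideal.mem_span_singleton_self x) hb) ha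

end IdealLemmas

section Configuration

variable {A : Type*} [CommRing A] {ι : Type*}

/-- The consequence of `SubsetsRegular f (m + 1)` that the proof uses. -/
def RegularModSubsets (f : ι → A) (m : ℕ) : Prop :=
  ∀ T : Finset ι, T.card ≤ m → ∀ x ∉ T, IsSMulRegular (A ⧸ Ideal.span (f '' T)) (f x)

theorem RegularModSubsets.mono {f : ι → A} {m m' : ℕ} (hf : RegularModSubsets f m)
    (h : m' ≤ m) : RegularModSubsets f m' :=
  fun T hT => hf T (hT.trans h)

theorem RegularModSubsets.ne_zero [Nontrivial A] {f : ι → A} {m : ℕ}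
    (hf : RegularModSubsets f m) (x : ι) : f x ≠ 0 := fun hx => by
  simpa using Ideal.isSMulRegular_quotient_iff.mp
    (hf ∅ (Nat.zero_le m) x (Finset.notMem_empty x)) 1 (by simp [hx])

variable [DecidableEq ι]

/-- `configIdealOn c f univ ∅ = configIdeal c f`; the generators `f '' X` added to every
component are needed for the induction in `configIdealOn_eq_sup`. -/
def configIdealOn (c : ℕ) (f : ι → A) (S X : Finset ι) : Ideal A :=
  ⨅ T ∈ {T : Finset ι | T ⊆ S ∧ T.card = c}, Ideal.span (f '' ↑(X ∪ T))

theorem span_image_insert (f : ι → A) (y : ι) (X : Finset ι) :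
    Ideal.span (f '' ↑(insert y X)) = Ideal.span {f y} ⊔ Ideal.span (f '' X) := by
  rw [Finset.coe_insert, Set.image_insert_eq, Ideal.span_insert]

theorem mem_configIdealOn {c : ℕ} {f : ι → A} {S X : Finset ι} {g : A} :
    g ∈ configIdealOn c f S X ↔
      ∀ T ⊆ S, T.card = c → g ∈ Ideal.span (f '' ↑(X ∪ T)) := by
  simp only [configIdealOn, Submodule.mem_iInf, Set.mem_ofPred_eq, and_imp]

theorem configIdealOn_zero (f : ι → A) (S X : Finset ι) :
    configIdealOn 0 f S X = Ideal.span (f '' X) := by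
  ext g
  simp only [mem_configIdealOn, Finset.card_eq_zero]
  exact ⟨fun h => by simpa using h ∅ (Finset.empty_subset S) rfl,
    fun h T _ hT => by simpa [hT] using h⟩

theorem configIdealOn_empty {c : ℕ} (hc : c ≠ 0) (f : ι → A) (X : Finset ι) :
    configIdealOn c f ∅ X = ⊤ := by
  refine eq_top_iff.mpr fun g _ => mem_configIdealOn.mpr fun T hT hTc => ?_
  rw [Finset.subset_empty.mp hT, Finset.card_empty] at hTc
  exact absurd hTc.symm hc

theorem configIdealOn_mono {c c' : ℕ} (h : c' ≤ c) (f : ι → A) (S : Finset ι) :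
    configIdealOn c' f S ∅ ≤ configIdealOn c f S ∅ := by
  refine fun g hg => mem_configIdealOn.mpr fun T hTS hTc => ?_
  obtain ⟨U, hUT, hUc⟩ := Finset.exists_subset_card_eq (h.trans hTc.ge)
  have hU := mem_configIdealOn.mp hg U (hUT.trans hTS) hUc
  rw [Finset.empty_union] at hU ⊢
  exact Ideal.span_mono (Set.image_mono hUT) hU

theorem sup_span_le_configIdealOn (c : ℕ) (f : ι → A) (S X : Finset ι) :
    configIdealOn c f S ∅ ⊔ Ideal.span (f '' X) ≤ configIdealOn c f S X := by
  refine sup_le (fun g hg => mem_configIdealOn.mpr fun T hTS hTc => ?_)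
    (fun g hg => mem_configIdealOn.mpr fun T _ _ => ?_)
  · have := mem_configIdealOn.mp hg T hTS hTc
    rw [Finset.empty_union] at this
    exact Ideal.span_mono (Set.image_mono Finset.subset_union_right) this
  · exact Ideal.span_mono (Set.image_mono Finset.subset_union_left) hg

theorem configIdealOn_insert_eq_inf {c : ℕ} (hc : c ≠ 0) (f : ι → A) {y : ι} {S : Finset ι}
    (hy : y ∉ S) (X : Finset ι) :
    configIdealOn c f (insert y S) X
      = configIdealOn c f S X ⊓ configIdealOn (c - 1) f S (insert y X) := by
  ext g
  simp only [Submodule.mem_inf, mem_configIdealOn]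
  constructor
  · intro h
    refine ⟨fun T hTS hTc => h T (hTS.trans (Finset.subset_insert y S)) hTc,
      fun U hUS hUc => ?_⟩
    have hyU : y ∉ U := fun h => hy (hUS h)
    simpa [Finset.insert_union, Finset.union_insert] using
      h (insert y U) (Finset.insert_subset_insert y hUS)
        (by rw [Finset.card_insert_of_notMem hyU]; omega)
  · rintro ⟨hS, hyS⟩ T hTS hTc
    by_cases hyT : y ∈ T
    · have hU := hyS (T.erase y) (fun i hi => ?_) (by rw [Finset.card_erase_of_mem hyT, hTc])
      · rwa [Finset.insert_union, ← Finset.union_insert, Finset.insert_erase hyT] at hU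
      · obtain ⟨hiy, hiT⟩ := Finset.mem_erase.mp hi
        exact (Finset.mem_insert.mp (hTS hiT)).resolve_left hiy
    · exact hS T (fun i hi => (Finset.mem_insert.mp (hTS hi)).resolve_left
        (fun h => hyT (h ▸ hi))) hTc

theorem isSMulRegular_quotient_configIdealOn {c m : ℕ} {f : ι → A}
    (hf : RegularModSubsets f m) {S X : Finset ι} (hm : c + X.card ≤ m) {x : ι} (hxS : x ∉ S)
    (hxX : x ∉ X) : IsSMulRegular (A ⧸ configIdealOn c f S X) (f x) := by
  refine Ideal.isSMulRegular_quotient_iInf fun T => Ideal.isSMulRegular_quotient_iInf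
    fun ⟨hTS, hTc⟩ => hf _ ?_ x ?_
  · exact (Finset.card_union_le X T).trans (by omega)
  · simp only [Finset.mem_union, not_or]
    exact ⟨hxX, fun h => hxS (hTS h)⟩

theorem configIdealOn_eq_sup {c : ℕ} {f : ι → A} {S X : Finset ι} (hSX : Disjoint S X)
    (hf : RegularModSubsets f (c + X.card)) :
    configIdealOn c f S X = configIdealOn c f S ∅ ⊔ Ideal.span (f '' X) := by
  induction S using Finset.induction_on generalizing c X with
  | empty =>
    obtain rfl | hc := eq_or_ne c 0
    · simp [configIdealOn_zero]
    · simp [configIdealOn_empty hc]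
  | @insert y S hy ih =>
    obtain rfl | hc := eq_or_ne c 0
    · simp [configIdealOn_zero]
    have hyX : y ∉ X := Finset.disjoint_left.mp hSX (Finset.mem_insert_self y S)
    have hSX' : Disjoint S X := hSX.mono_left (Finset.subset_insert y S)
    have hIns : ∀ c' Y, Y ⊆ X → c' + Y.card < c + X.card → configIdealOn c' f S (insert y Y)
        = configIdealOn c' f S ∅ ⊔ Ideal.span {f y} ⊔ Ideal.span (f '' Y) := by
      intro c' Y hY hc'
      have hcard : c' + (insert y Y).card ≤ c + X.card :=
        (Nat.add_le_add_left (Finset.card_insert_le y Y) c').trans (by omega)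
      rw [ih (Finset.disjoint_insert_right.mpr ⟨hy, hSX'.mono_right hY⟩) (hf.mono hcard),
        span_image_insert, sup_assoc]
    set J := configIdealOn c f S ∅
    set K := configIdealOn (c - 1) f S ∅
    have hKJ : K ≤ J := configIdealOn_mono (Nat.sub_le c 1) f S
    have hsplit : configIdealOn c f (insert y S) ∅ = J ⊓ (K ⊔ Ideal.span {f y}) := by
      rw [configIdealOn_insert_eq_inf hc f hy,
        hIns (c - 1) ∅ (Finset.empty_subset X) (by simp; omega), Finset.coe_empty,
        Set.image_empty, Ideal.span_empty, sup_bot_eq]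
    refine le_antisymm ?_ (sup_span_le_configIdealOn c f _ X)
    rw [configIdealOn_insert_eq_inf hc f hy, ih hSX' hf, hIns (c - 1) X subset_rfl (by omega),
      hsplit]
    refine Ideal.inf_sup_span_image_le f J _ X fun x hx Y hY => ?_
    have hYX : Y ⊆ X := hY.trans (Finset.erase_subset x X)
    have hYc : Y.card < X.card :=
      (Finset.card_le_card hY).trans_lt (Finset.card_erase_lt_of_mem hx)
    have hxY : x ∉ insert y Y := by
      rw [Finset.mem_insert, not_or]
      exact ⟨fun h => hyX (h ▸ hx), fun h => (Finset.mem_erase.mp (hY h)).1 rfl⟩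
    -- by induction, the ideal modulo which `f x` has to be regular is a configuration ideal again
    rw [← sup_assoc, sup_eq_left.mpr hKJ, ← hIns c Y hYX (by omega)]
    exact isSMulRegular_quotient_configIdealOn hf
      ((Nat.add_le_add_left (Finset.card_insert_le y Y) c).trans (by omega))
      (fun h => Finset.disjoint_left.mp hSX (Finset.mem_insert_of_mem h) hx) hxY

theorem configIdealOn_insert_eq_mul_sup {c : ℕ} (hc : c ≠ 0) {f : ι → A}
    (hf : RegularModSubsets f c) {x : ι} {S : Finset ι} (hx : x ∉ S) :
    configIdealOn c f (insert x S) ∅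
      = Ideal.span {f x} * configIdealOn c f S ∅ ⊔ configIdealOn (c - 1) f S ∅ := by
  rw [configIdealOn_insert_eq_inf hc f hx, configIdealOn_eq_sup
      (Finset.disjoint_insert_right.mpr ⟨hx, Finset.disjoint_empty_right S⟩)
      (hf.mono (by simp; omega)),
    span_image_insert, Finset.coe_empty, Set.image_empty, Ideal.span_empty, sup_bot_eq]
  exact Ideal.inf_sup_span_singleton_eq (configIdealOn_mono (Nat.sub_le c 1) f S)
    (isSMulRegular_quotient_configIdealOn hf (by simp) hx (Finset.notMem_empty x))

end Configuration

section FinIndex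

open RingTheory.Sequence

variable {A : Type*} [CommRing A]

theorem SubsetsRegular.regularModSubsets {s m : ℕ} {f : Fin s → A}
    (hf : SubsetsRegular f (m + 1)) : RegularModSubsets f m := by
  intro T hT x hx
  have hl := (hf (T.toList ++ [x]) (List.nodup_append.mpr ⟨T.nodup_toList,
    List.nodup_singleton x, fun a ha b hb => by
      rw [List.mem_singleton.mp hb]; exact fun h => hx (h ▸ Finset.mem_toList.mp ha)⟩)
    (by simpa using hT)).toIsWeaklyRegular
  rw [List.map_append, isWeaklyRegular_append_iff, List.map_singleton,
    isWeaklyRegular_singleton_iff, smul_eq_mul, Ideal.mul_top] at hl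
  have hspan : Ideal.ofList (T.toList.map f) = Ideal.span (f '' T) := by
    rw [Ideal.ofList]
    congr 1
    ext
    simp
  rw [Ideal.isSMulRegular_quotient_iff, ← hspan]
  exact (isSMulRegular_quotient_iff_mem_of_smul_mem _ _).mp hl.2

theorem configIdeal_comp_embedding (c : ℕ) {ι : Type*} [DecidableEq ι] (f : ι → A) {s : ℕ}
    (e : Fin s ↪ ι) :
    configIdeal c (f ∘ e) = configIdealOn c f (Finset.univ.map e) ∅ := by
  ext g
  simp only [configIdeal, Submodule.mem_iInf, Set.mem_ofPred_eq, mem_configIdealOn,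
    Finset.empty_union, Finset.subset_map_iff]
  constructor
  · rintro h _ ⟨U, -, rfl⟩ hUc
    rw [Finset.card_map] at hUc
    rw [Finset.coe_map, ← Set.image_comp]
    exact h U hUc
  · intro h U hUc
    have := h (U.map e) ⟨U, Finset.subset_univ U, rfl⟩ (by rw [Finset.card_map, hUc])
    rwa [Finset.coe_map, ← Set.image_comp] at this

theorem configIdeal_eq_configIdealOn_univ (c : ℕ) {s : ℕ} (f : Fin s → A) :
    configIdeal c f = configIdealOn c f Finset.univ ∅ := by
  rw [← Finset.map_refl (s := Finset.univ), ← configIdeal_comp_embedding]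
  rfl

end FinIndex

section Graded

attribute [local instance] MvPolynomial.gradedAlgebra

variable {k : Type} [Field k] {σ : Type}

theorem isHomogeneous_configIdealOn {ι : Type*} [DecidableEq ι] {f : ι → MvPolynomial σ k}
    {d : ι → ℕ} (hf : ∀ i, (f i).IsHomogeneous (d i)) (c : ℕ) (S X : Finset ι) :
    (configIdealOn c f S X).IsHomogeneous (homogeneousSubmodule σ k) :=
  Ideal.IsHomogeneous.iInf₂ fun _ _ => Ideal.homogeneous_span _ _ <| by
    rintro _ ⟨i, -, rfl⟩
    exact ⟨d i, hf i⟩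

theorem homogeneousComponent_mul_of_isHomogeneous {q : MvPolynomial σ k} {e : ℕ}
    (hq : q.IsHomogeneous e) (h : MvPolynomial σ k) (t : ℕ) :
    homogeneousComponent t (q * h) = if e ≤ t then q * homogeneousComponent (t - e) h else 0 := by
  rw [← decomposition.decompose'_apply, ← decomposition.decompose'_apply]
  exact DirectSum.coe_decompose_mul_of_left_mem (homogeneousSubmodule σ k) t hq

noncomputable def degreePiece (I : Ideal (MvPolynomial σ k)) (t : ℕ) :
    Submodule k (MvPolynomial σ k) :=
  Submodule.restrictScalars k (I : Submodule (MvPolynomial σ k) (MvPolynomial σ k)) ⊓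
    homogeneousSubmodule σ k t

theorem mem_degreePiece {I : Ideal (MvPolynomial σ k)} {t : ℕ} {g : MvPolynomial σ k} :
    g ∈ degreePiece I t ↔ g ∈ I ∧ g.IsHomogeneous t := by
  rw [degreePiece, Submodule.mem_inf, Submodule.restrictScalars_mem, mem_homogeneousSubmodule]

theorem degreePiece_mono {I J : Ideal (MvPolynomial σ k)} (h : I ≤ J) (t : ℕ) :
    degreePiece I t ≤ degreePiece J t :=
  inf_le_inf_right _ h

instance [Finite σ] (I : Ideal (MvPolynomial σ k)) (t : ℕ) :
    FiniteDimensional k (degreePiece I t) :=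
  Submodule.finiteDimensional_of_le (inf_le_right.trans fun p hp =>
    (mem_restrictTotalDegree σ t p).mpr ((mem_homogeneousSubmodule t p).mp hp).totalDegree_le)

variable {q : MvPolynomial σ k} {e : ℕ}

theorem degreePiece_span_singleton_mul_sup_le {A B : Ideal (MvPolynomial σ k)}
    (hA : A.IsHomogeneous (homogeneousSubmodule σ k))
    (hB : B.IsHomogeneous (homogeneousSubmodule σ k)) (hq : q.IsHomogeneous e) (t : ℕ) :
    degreePiece (Ideal.span {q} * B ⊔ A) t
      ≤ (if e ≤ t then (degreePiece B (t - e)).map (LinearMap.mulLeft k q) else ⊥)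
        ⊔ degreePiece A t := by
  intro g hg
  obtain ⟨hgI, hgt⟩ := mem_degreePiece.mp hg
  obtain ⟨_, hu, a, ha, rfl⟩ := Submodule.mem_sup.mp hgI
  obtain ⟨h, hh, rfl⟩ := Ideal.mem_span_singleton_mul.mp hu
  rw [← homogeneousComponent_eq_self hgt, map_add, homogeneousComponent_mul_of_isHomogeneous hq]
  refine Submodule.add_mem_sup ?_ (mem_degreePiece.mpr
    ⟨homogeneousComponent_mem_of_mem hA ha t, homogeneousComponent_isHomogeneous t a⟩)
  split_ifs
  · exact ⟨_, mem_degreePiece.mpr ⟨homogeneousComponent_mem_of_mem hB hh _,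
      homogeneousComponent_isHomogeneous _ h⟩, rfl⟩
  · exact Submodule.zero_mem ⊥

theorem map_mulLeft_degreePiece_le (hq : q.IsHomogeneous e) (B : Ideal (MvPolynomial σ k))
    (u : ℕ) :
    (degreePiece B u).map (LinearMap.mulLeft k q)
      ≤ degreePiece (Ideal.span {q} * B) (e + u) := by
  rintro _ ⟨h, hh, rfl⟩
  obtain ⟨hhB, hhu⟩ := mem_degreePiece.mp hh
  exact mem_degreePiece.mpr
    ⟨Ideal.mul_mem_mul (Ideal.mem_span_singleton_self q) hhB, hq.mul hhu⟩

theorem degreePiece_span_singleton_mul_sup_add {A B : Ideal (MvPolynomial σ k)}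
    (hA : A.IsHomogeneous (homogeneousSubmodule σ k))
    (hB : B.IsHomogeneous (homogeneousSubmodule σ k)) (hq : q.IsHomogeneous e) (u : ℕ) :
    degreePiece (Ideal.span {q} * B ⊔ A) (e + u)
      = (degreePiece B u).map (LinearMap.mulLeft k q) ⊔ degreePiece A (e + u) := by
  refine le_antisymm ?_ (sup_le ((map_mulLeft_degreePiece_le hq B u).trans
    (degreePiece_mono le_sup_left _)) (degreePiece_mono le_sup_right _))
  simpa using degreePiece_span_singleton_mul_sup_le hA hB hq (e + u)

theorem degreePiece_span_singleton_mul_sup_of_lt {A B : Ideal (MvPolynomial σ k)}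
    (hA : A.IsHomogeneous (homogeneousSubmodule σ k))
    (hB : B.IsHomogeneous (homogeneousSubmodule σ k)) (hq : q.IsHomogeneous e) {t : ℕ}
    (ht : t < e) :
    degreePiece (Ideal.span {q} * B ⊔ A) t = degreePiece A t := by
  refine le_antisymm ?_ (degreePiece_mono le_sup_right _)
  simpa [Nat.not_le.mpr ht] using degreePiece_span_singleton_mul_sup_le hA hB hq t

theorem map_mulLeft_degreePiece_inf {A B : Ideal (MvPolynomial σ k)} (hAB : A ≤ B)
    (hqA : IsSMulRegular (MvPolynomial σ k ⧸ A) q) (hq : q.IsHomogeneous e) (u : ℕ) :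
    (degreePiece B u).map (LinearMap.mulLeft k q) ⊓ degreePiece A (e + u)
      = (degreePiece A u).map (LinearMap.mulLeft k q) := by
  refine le_antisymm ?_ (le_inf (Submodule.map_mono (degreePiece_mono hAB u))
    ((map_mulLeft_degreePiece_le hq A u).trans (degreePiece_mono Ideal.mul_le_right _)))
  rintro _ ⟨⟨h, hh, rfl⟩, hqh⟩
  exact ⟨h, mem_degreePiece.mpr ⟨Ideal.isSMulRegular_quotient_iff.mp hqA h
    (mem_degreePiece.mp hqh).1, (mem_degreePiece.mp hh).2⟩, rfl⟩

theorem finrank_map_mulLeft (hq0 : q ≠ 0) (W : Submodule k (MvPolynomial σ k)) :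
    Module.finrank k (W.map (LinearMap.mulLeft k q)) = Module.finrank k W :=
  (Submodule.equivMapOfInjective _ (mul_right_injective₀ hq0) W).finrank_eq.symm

theorem finrank_degreePiece_span_singleton_mul_sup [Finite σ] {A B : Ideal (MvPolynomial σ k)}
    (hA : A.IsHomogeneous (homogeneousSubmodule σ k))
    (hB : B.IsHomogeneous (homogeneousSubmodule σ k)) (hAB : A ≤ B) (hq : q.IsHomogeneous e)
    (hq0 : q ≠ 0) (hqA : IsSMulRegular (MvPolynomial σ k ⧸ A) q) (u : ℕ) :
    Module.finrank k (degreePiece (Ideal.span {q} * B ⊔ A) (e + u))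
        + Module.finrank k (degreePiece A u)
      = Module.finrank k (degreePiece B u) + Module.finrank k (degreePiece A (e + u)) := by
  have := Submodule.finrank_sup_add_finrank_inf_eq
    ((degreePiece B u).map (LinearMap.mulLeft k q)) (degreePiece A (e + u))
  rwa [map_mulLeft_degreePiece_inf hAB hqA hq, ← degreePiece_span_singleton_mul_sup_add hA hB hq,
    finrank_map_mulLeft hq0, finrank_map_mulLeft hq0] at this

theorem hilbertFn_of_neg (I : Ideal (MvPolynomial σ k)) {t : ℤ} (ht : t < 0) :
    hilbertFn k I t = 0 :=
  if_pos ht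

theorem hilbertFn_natCast (I : Ideal (MvPolynomial σ k)) (t : ℕ) :
    hilbertFn k I t = Module.finrank k (homogeneousSubmodule σ k t)
      - Module.finrank k (degreePiece I t) := by
  rw [hilbertFn, if_neg (Int.natCast_nonneg t).not_gt, Int.toNat_natCast]
  rfl

theorem hilbertFn_span_singleton_mul_sup [Finite σ] {A B : Ideal (MvPolynomial σ k)}
    (hA : A.IsHomogeneous (homogeneousSubmodule σ k))
    (hB : B.IsHomogeneous (homogeneousSubmodule σ k)) (hAB : A ≤ B) (hq : q.IsHomogeneous e)
    (hq0 : q ≠ 0) (hqA : IsSMulRegular (MvPolynomial σ k ⧸ A) q) (t : ℤ) :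
    hilbertFn k (Ideal.span {q} * B ⊔ A) t
      = hilbertFn k A t - hilbertFn k A (t - e) + hilbertFn k B (t - e) := by
  rcases lt_or_ge t e with hte | het
  · rw [hilbertFn_of_neg _ (sub_neg.mpr hte), hilbertFn_of_neg _ (sub_neg.mpr hte), sub_zero,
      add_zero]
    rcases lt_or_ge t 0 with ht | ht
    · rw [hilbertFn_of_neg _ ht, hilbertFn_of_neg _ ht]
    · lift t to ℕ using ht
      rw [hilbertFn_natCast, hilbertFn_natCast,
        degreePiece_span_singleton_mul_sup_of_lt hA hB hq (by omega)]
  · obtain ⟨u, rfl⟩ : ∃ u : ℕ, t = e + u := ⟨(t - e).toNat, by omega⟩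
    rw [add_sub_cancel_left, ← Nat.cast_add, hilbertFn_natCast, hilbertFn_natCast,
      hilbertFn_natCast, hilbertFn_natCast]
    have := finrank_degreePiece_span_singleton_mul_sup hA hB hAB hq hq0 hqA u
    omega

end Graded

theorem statement5_general (k : Type) [Field k] (n s c : ℕ)
    (hc1 : 1 ≤ c)
    (f : Fin (s + 1) → MvPolynomial (Fin (n + 1)) k) (d : Fin (s + 1) → ℕ)
    (hdeg : ∀ i, (f i).IsHomogeneous (d i))
    (hreg : SubsetsRegular f (c + 1)) :
    ∀ t : ℤ,
      hilbertFn k (configIdeal c f) t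
        = (hilbertFn k (configIdeal (c - 1) (f ∘ Fin.castSucc)) t
            - hilbertFn k (configIdeal (c - 1) (f ∘ Fin.castSucc)) (t - d (Fin.last s)))
          + hilbertFn k (configIdeal c (f ∘ Fin.castSucc)) (t - d (Fin.last s)) := by
  have hf : RegularModSubsets f c := hreg.regularModSubsets
  set S := Finset.univ.map (Fin.castSuccEmb (n := s))
  have hlast : Fin.last s ∉ S := by simp [S]
  have hI : configIdeal c f = Ideal.span {f (Fin.last s)} * configIdealOn c f S ∅
      ⊔ configIdealOn (c - 1) f S ∅ := by
    rw [configIdeal_eq_configIdealOn_univ, Fin.univ_castSuccEmb, Finset.cons_eq_insert,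
      configIdealOn_insert_eq_mul_sup (by omega) hf hlast]
  rw [hI, ← Fin.coe_castSuccEmb, configIdeal_comp_embedding, configIdeal_comp_embedding]
  exact hilbertFn_span_singleton_mul_sup (isHomogeneous_configIdealOn hdeg _ _ _)
    (isHomogeneous_configIdealOn hdeg _ _ _) (configIdealOn_mono (Nat.sub_le c 1) f S)
    (hdeg _) (hf.ne_zero _)
    (isSMulRegular_quotient_configIdealOn hf (by simp) hlast (Finset.notMem_empty _))

theorem statement5 (k : Type) [Field k] [Infinite k] (n s c : ℕ)
    (hc1 : 1 ≤ c) (hcn : c ≤ n) (hcs : c ≤ s)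
    (f : Fin (s + 1) → MvPolynomial (Fin (n + 1)) k) (d : Fin (s + 1) → ℕ)
    (hdeg : ∀ i, (f i).IsHomogeneous (d i))
    (hreg : SubsetsRegular f (c + 1)) :
    ∀ t : ℤ,
      hilbertFn k (configIdeal c f) t
        = (hilbertFn k (configIdeal (c - 1) (f ∘ Fin.castSucc)) t
            - hilbertFn k (configIdeal (c - 1) (f ∘ Fin.castSucc)) (t - d (Fin.last s)))
          + hilbertFn k (configIdeal c (f ∘ Fin.castSucc)) (t - d (Fin.last s)) :=
  statement5_general k n s c hc1 f d hdeg hreg
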